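/- For every real ε and every integer m ≥ 1, setting Q_ε := ½(id−S) + ε·J^{⋆m} (the grade-m pre-remainder of the perturbed sinhlog integrator), the following identity holds for every real inner product space and every family of vectors (V_w), with the inner product taken over the words of length m: ‖(id−E)∘id‖² = ‖(id−E)∘Q_ε‖² + ‖(id−E)∘½(id+S)‖² − ε·⟨(id−E)∘(id−S), (id−E)∘J^{⋆m}⟩ − ε²·‖(id−E)∘J^{⋆m}‖². -/

import Mathlib

open Finsupp

/-- Words over the alphabet `A = {0,1,…,d}`. -/
abbrev Word (d : ℕ) : Type := List (Fin (d+1))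

/-- The free real vector space with basis the set of all words. -/
abbrev KA (d : ℕ) : Type := Word d →₀ ℝ

/-- Shuffle product of two words, as an element of `KA d`. -/
noncomputable def shuffleWord (d : ℕ) : Word d → Word d → KA d
  | [], v => Finsupp.single v 1
  | a :: u, [] => Finsupp.single (a :: u) 1
  | a :: u, b :: v =>
      Finsupp.mapDomain (List.cons a) (shuffleWord d u (b :: v)) +
      Finsupp.mapDomain (List.cons b) (shuffleWord d (a :: u) v)
  termination_by u v => u.length + v.length

/-- Bilinear extension of the shuffle product to `KA d`. -/
noncomputable def sh (d : ℕ) (x y : KA d) : KA d :=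
  x.sum fun u cu => y.sum fun v cv => (cu * cv) • shuffleWord d u v

/-- Admissible words: concatenations of blocks each of which is the single
letter `0` or a pair `aa` with `a ≠ 0`. -/
inductive Admissible (d : ℕ) : Word d → Prop
  | nil : Admissible d []
  | zero {w : Word d} : Admissible d w → Admissible d (0 :: w)
  | pair {w : Word d} (a : Fin (d+1)) : a ≠ 0 → Admissible d w →
      Admissible d (a :: a :: w)

/-- Number of `0` letters. -/
def zc (d : ℕ) (w : Word d) : ℕ := w.count 0

/-- Half the number of nonzero letters. -/
def dc (d : ℕ) (w : Word d) : ℕ := (w.length - w.count 0) / 2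

def nc (d : ℕ) (w : Word d) : ℕ := zc d w + dc d w

open Classical in
/-- The expectation map on words. -/
noncomputable def Ebar (d : ℕ) (t : ℝ) (w : Word d) : ℝ :=
  if Admissible d w then t ^ nc d w / (2 ^ dc d w * Nat.factorial (nc d w)) else 0

/-- Linear extension of the expectation map to `KA d`. -/
noncomputable def EbarL (d : ℕ) (t : ℝ) (x : KA d) : ℝ :=
  x.sum fun w c => c * Ebar d t w

/-- The linear endomorphism of `KA d` determined by values on basis words. -/
noncomputable def wordLift (d : ℕ) (f : Word d → KA d) : KA d →ₗ[ℝ] KA d :=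
  Finsupp.lsum ℝ fun w => LinearMap.toSpanSingleton ℝ (KA d) (f w)

/-- The identity endomorphism `id`. -/
noncomputable def idE (d : ℕ) : KA d →ₗ[ℝ] KA d := LinearMap.id

/-- The reversal endomorphism `|S|`. -/
noncomputable def revE (d : ℕ) : KA d →ₗ[ℝ] KA d :=
  wordLift d fun w => Finsupp.single w.reverse 1

/-- The antipode `S`. -/
noncomputable def Sa (d : ℕ) : KA d →ₗ[ℝ] KA d :=
  wordLift d fun w => Finsupp.single w.reverse ((-1 : ℝ) ^ w.length)

/-- The convolution unit `ν`. -/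
noncomputable def nuE (d : ℕ) : KA d →ₗ[ℝ] KA d :=
  wordLift d fun w => if w = [] then Finsupp.single ([] : Word d) 1 else 0

/-- The expectation endomorphism `E`. -/
noncomputable def EE (d : ℕ) (t : ℝ) : KA d →ₗ[ℝ] KA d :=
  wordLift d fun w => Finsupp.single ([] : Word d) (Ebar d t w)

/-- The convolution product `X ⋆ Y`. -/
noncomputable def conv (d : ℕ) (X Y : KA d →ₗ[ℝ] KA d) : KA d →ₗ[ℝ] KA d :=
  wordLift d fun w => ∑ k ∈ Finset.range (w.length + 1),
    sh d (X (Finsupp.single (w.take k) 1)) (Y (Finsupp.single (w.drop k) 1))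

/-- Convolution powers, `X^{⋆0} = ν`. -/
noncomputable def convPow (d : ℕ) (X : KA d →ₗ[ℝ] KA d) : ℕ → (KA d →ₗ[ℝ] KA d)
  | 0 => nuE d
  | k + 1 => conv d X (convPow d X k)

/-- The inner product `⟨X,Y⟩` of endomorphisms, taken over the words of
length `n`, relative to the family of vectors `Vf`. -/
noncomputable def ip (d : ℕ) (t : ℝ) {H : Type*} [NormedAddCommGroup H]
    [InnerProductSpace ℝ H] (Vf : Word d → H) (n : ℕ)
    (X Y : KA d →ₗ[ℝ] KA d) : ℝ :=
  ∑ u : Fin n → Fin (d+1), ∑ v : Fin n → Fin (d+1),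
    EbarL d t (sh d (X (Finsupp.single (List.ofFn u) 1))
                    (Y (Finsupp.single (List.ofFn v) 1))) *
      (inner ℝ (Vf (List.ofFn u)) (Vf (List.ofFn v)) : ℝ)

/-- Positive semidefiniteness of the expectation Gram matrix at grade `n`:
indexed by the words of length `n` together with the empty word. -/
def gramPSD (d n : ℕ) (t : ℝ) : Prop :=
  ∀ c : Option (Fin n → Fin (d+1)) → ℝ,
    0 ≤ ∑ x : Option (Fin n → Fin (d+1)), ∑ y : Option (Fin n → Fin (d+1)),
      c x * c y *
        EbarL d t (shuffleWord d (x.elim ([] : Word d) List.ofFn)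
                                 (y.elim ([] : Word d) List.ofFn))

/-- The grade-`m` pre-remainder `Q_ε = ½(id−S) + ε·J^{⋆m}` of the perturbed
sinhlog integrator. -/
noncomputable def Qeps (d m : ℕ) (ε : ℝ) : KA d →ₗ[ℝ] KA d :=
  (1 / 2 : ℝ) • (idE d - Sa d) + ε • convPow d (idE d - nuE d) m

/-! Put `A = (id−E)∘id`, `B = (id−E)∘S` and `C = (id−E)∘J^{⋆m}`. The pairing `⟨·,·⟩` is a
symmetric bilinear form, so expanding `‖½(A−B) + εC‖² + ‖½(A+B)‖²` reduces the identity to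
`‖B‖² = ‖A‖²`. On words of length `m` the antipode is `(−1)^m` times reversal, and reversal is
an automorphism of the shuffle product that preserves admissibility (hence `Ē`) and commutes
with `E`; the two signs cancel in the pairing. -/

section ListFinsupp

variable {α M : Type*} [AddCommMonoid M]

lemma mapDomain_cons_mapDomain_append_singleton (c a : α) (x : List α →₀ M) :
    mapDomain (List.cons c) (mapDomain (· ++ [a]) x)
      = mapDomain (· ++ [a]) (mapDomain (List.cons c) x) := by
  rw [← mapDomain_comp, ← mapDomain_comp]
  rfl

lemma mapDomain_reverse_mapDomain_cons (a : α) (x : List α →₀ M) :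
    mapDomain List.reverse (mapDomain (List.cons a) x)
      = mapDomain (· ++ [a]) (mapDomain List.reverse x) := by
  rw [← mapDomain_comp, ← mapDomain_comp]
  congr 1
  funext w
  simp

end ListFinsupp

lemma lhom_ext₂_single {α β R N : Type*} [CommSemiring R] [AddCommMonoid N] [Module R N]
    ⦃φ ψ : (α →₀ R) →ₗ[R] (β →₀ R) →ₗ[R] N⦄
    (h : ∀ a b, φ (single a 1) (single b 1) = ψ (single a 1) (single b 1)) : φ = ψ :=
  lhom_ext' fun a => LinearMap.ext_ring <| lhom_ext' fun b => LinearMap.ext_ring (h a b)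

lemma LinearMap.BilinForm.IsSymm.parallelogram_perturb {K M : Type*} [Field K] [CharZero K]
    [AddCommGroup M] [Module K M] {B : LinearMap.BilinForm K M} (hB : B.IsSymm) {a b : M}
    (hab : B b b = B a a) (c : M) (ε : K) :
    B a a = B ((1 / 2 : K) • (a - b) + ε • c) ((1 / 2 : K) • (a - b) + ε • c)
      + B ((1 / 2 : K) • (a + b)) ((1 / 2 : K) • (a + b))
      - ε * B (a - b) c - ε ^ 2 * B c c := by
  simp only [map_add, map_sub, map_smul, LinearMap.add_apply, LinearMap.sub_apply,
    LinearMap.smul_apply, smul_eq_mul, hB.eq c a, hB.eq c b, hB.eq b a]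
  linear_combination (-1 / 2 : K) * hab

variable {d : ℕ}

lemma shuffleWord_nil_left (v : Word d) : shuffleWord d [] v = single v 1 := by
  cases v <;> simp [shuffleWord]

lemma shuffleWord_nil_right (u : Word d) : shuffleWord d u [] = single u 1 := by
  cases u <;> simp [shuffleWord]

lemma shuffleWord_cons_cons (a b : Fin (d+1)) (u v : Word d) :
    shuffleWord d (a :: u) (b :: v) =
      mapDomain (List.cons a) (shuffleWord d u (b :: v)) +
      mapDomain (List.cons b) (shuffleWord d (a :: u) v) := by
  rw [shuffleWord]

lemma shuffleWord_comm (u v : Word d) : shuffleWord d u v = shuffleWord d v u := by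
  induction h : u.length + v.length using Nat.strong_induction_on generalizing u v with
  | _ n ih =>
    match u, v with
    | [], v => rw [shuffleWord_nil_left, shuffleWord_nil_right]
    | a :: u, [] => rw [shuffleWord_nil_left, shuffleWord_nil_right]
    | a :: u, b :: v =>
      rw [shuffleWord_cons_cons, shuffleWord_cons_cons, add_comm,
        ih _ (by simp [← h]) u (b :: v) rfl, ih _ (by simp [← h]) (a :: u) v rfl]

lemma shuffleWord_append_singleton (a b : Fin (d+1)) (u v : Word d) :
    shuffleWord d (u ++ [a]) (v ++ [b]) =
      mapDomain (· ++ [a]) (shuffleWord d u (v ++ [b])) +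
      mapDomain (· ++ [b]) (shuffleWord d (u ++ [a]) v) := by
  induction h : u.length + v.length using Nat.strong_induction_on generalizing u v with
  | _ n ih =>
    have ih' (u' v' : Word d) (h' : u'.length + v'.length < n) := ih _ h' u' v' rfl
    match u, v with
    | [], [] =>
      simp only [List.nil_append, shuffleWord_cons_cons, shuffleWord_nil_left,
        shuffleWord_nil_right, mapDomain_single, List.cons_append]
      exact add_comm _ _
    | [], c :: v =>
      have h1 := ih' [] v (by simp [← h])
      simp only [List.nil_append, List.cons_append] at h1 ⊢
      simp only [shuffleWord_cons_cons, h1, shuffleWord_nil_left, mapDomain_add,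
        mapDomain_single, mapDomain_cons_mapDomain_append_singleton, List.cons_append]
      abel
    | c :: u, [] =>
      have h1 := ih' u [] (by simp [← h])
      simp only [List.nil_append, List.cons_append] at h1 ⊢
      simp only [shuffleWord_cons_cons, h1, shuffleWord_nil_right, mapDomain_add,
        mapDomain_single, mapDomain_cons_mapDomain_append_singleton, List.cons_append]
      abel
    | c :: u, e :: v =>
      have h1 := ih' u (e :: v) (by simp [← h])
      have h2 := ih' (c :: u) v (by simp [← h])
      simp only [List.cons_append] at h1 h2 ⊢
      simp only [shuffleWord_cons_cons, h1, h2, mapDomain_add,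
        mapDomain_cons_mapDomain_append_singleton]
      abel

lemma shuffleWord_reverse (u v : Word d) :
    shuffleWord d u.reverse v.reverse = mapDomain List.reverse (shuffleWord d u v) := by
  induction h : u.length + v.length using Nat.strong_induction_on generalizing u v with
  | _ n ih =>
    match u, v with
    | [], v => simp [shuffleWord_nil_left, mapDomain_single]
    | a :: u, [] => simp [shuffleWord_nil_right, mapDomain_single]
    | a :: u, b :: v =>
      rw [shuffleWord_cons_cons, mapDomain_add, mapDomain_reverse_mapDomain_cons,
        mapDomain_reverse_mapDomain_cons, ← ih _ (by simp [← h]) u (b :: v) rfl,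
        ← ih _ (by simp [← h]) (a :: u) v rfl, List.reverse_cons, List.reverse_cons,
        shuffleWord_append_singleton]

noncomputable def shuffleBilin (d : ℕ) : KA d →ₗ[ℝ] KA d →ₗ[ℝ] KA d :=
  linearCombination ℝ fun u => linearCombination ℝ (shuffleWord d u)

lemma sh_eq_shuffleBilin (x y : KA d) : sh d x y = shuffleBilin d x y := by
  simp only [sh, shuffleBilin, linearCombination_apply, LinearMap.finsupp_sum_apply,
    LinearMap.smul_apply, Finsupp.smul_sum, smul_smul]

lemma shuffleBilin_single (u v : Word d) (a b : ℝ) :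
    shuffleBilin d (single u a) (single v b) = (a * b) • shuffleWord d u v := by
  simp [shuffleBilin, smul_smul]

lemma shuffleBilin_comm (x y : KA d) : shuffleBilin d x y = shuffleBilin d y x := by
  rw [← LinearMap.flip_apply (f := shuffleBilin d)]
  congr 2
  exact lhom_ext₂_single fun u v => by simp [shuffleBilin_single, shuffleWord_comm]

lemma revE_eq_lmapDomain : revE d = lmapDomain ℝ ℝ List.reverse :=
  lhom_ext fun w c => by simp [revE, wordLift]

lemma shuffleBilin_revE (x y : KA d) :
    shuffleBilin d (revE d x) (revE d y) = revE d (shuffleBilin d x y) := by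
  have h : (shuffleBilin d).compl₁₂ (revE d) (revE d) = (shuffleBilin d).compr₂ (revE d) :=
    lhom_ext₂_single fun u v => by
      simp [revE_eq_lmapDomain, shuffleBilin_single, shuffleWord_reverse]
  exact LinearMap.congr_fun₂ h x y

lemma EbarL_eq_linearCombination (t : ℝ) (x : KA d) :
    EbarL d t x = linearCombination ℝ (Ebar d t) x := by
  simp [EbarL, linearCombination_apply]

lemma Admissible.append {u v : Word d} (hu : Admissible d u) (hv : Admissible d v) :
    Admissible d (u ++ v) := by
  induction hu with
  | nil => exact hv
  | zero _ ih => exact .zero ih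
  | pair a ha _ ih => exact .pair a ha ih

lemma Admissible.reverse {w : Word d} (h : Admissible d w) : Admissible d w.reverse := by
  induction h with
  | nil => exact .nil
  | zero _ ih => simpa using ih.append (.zero .nil)
  | pair a ha _ ih => simpa using ih.append (.pair a ha .nil)

lemma admissible_reverse_iff {w : Word d} : Admissible d w.reverse ↔ Admissible d w :=
  ⟨fun h => by simpa using h.reverse, .reverse⟩

lemma Ebar_reverse (t : ℝ) (w : Word d) : Ebar d t w.reverse = Ebar d t w := by
  unfold Ebar
  rw [admissible_reverse_iff]
  simp only [nc, zc, dc, List.count_reverse, List.length_reverse]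

lemma EbarL_revE (t : ℝ) (x : KA d) : EbarL d t (revE d x) = EbarL d t x := by
  rw [EbarL_eq_linearCombination, EbarL_eq_linearCombination, revE_eq_lmapDomain,
    ← LinearMap.comp_apply, ← linearCombination_comp]
  congr 2
  exact funext (Ebar_reverse t)

lemma EbarL_sh_revE (t : ℝ) (x y : KA d) :
    EbarL d t (sh d (revE d x) (revE d y)) = EbarL d t (sh d x y) := by
  rw [sh_eq_shuffleBilin, sh_eq_shuffleBilin, shuffleBilin_revE, EbarL_revE]

lemma revE_single (w : Word d) (c : ℝ) : revE d (single w c) = single w.reverse c := by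
  rw [revE_eq_lmapDomain, lmapDomain_apply, mapDomain_single]

lemma EE_single (t : ℝ) (w : Word d) (c : ℝ) :
    EE d t (single w c) = single [] (c * Ebar d t w) := by
  simp [EE, wordLift]

lemma idE_sub_EE_comp_revE (t : ℝ) :
    (idE d - EE d t) ∘ₗ revE d = revE d ∘ₗ (idE d - EE d t) :=
  lhom_ext fun w c => by
    simp only [LinearMap.comp_apply, LinearMap.sub_apply, idE, LinearMap.id_apply, map_sub,
      revE_single, EE_single, Ebar_reverse, List.reverse_nil]

lemma Sa_single (w : Word d) :
    Sa d (single w 1) = (-1 : ℝ) ^ w.length • revE d (single w 1) := by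
  simp [Sa, revE, wordLift]

lemma idE_sub_EE_comp_Sa_single (t : ℝ) (w : Word d) :
    ((idE d - EE d t) ∘ₗ Sa d) (single w 1)
      = (-1 : ℝ) ^ w.length • revE d ((idE d - EE d t) (single w 1)) := by
  rw [LinearMap.comp_apply, Sa_single, map_smul, ← LinearMap.comp_apply,
    idE_sub_EE_comp_revE, LinearMap.comp_apply]

section InnerProduct

variable (t : ℝ) {H : Type*} [NormedAddCommGroup H] [InnerProductSpace ℝ H]
  (Vf : Word d → H) (n : ℕ)

noncomputable def ipForm : LinearMap.BilinForm ℝ (KA d →ₗ[ℝ] KA d) :=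
  LinearMap.mk₂ ℝ (ip d t Vf n)
    (fun X X' Y => by
      simp only [ip, LinearMap.add_apply, sh_eq_shuffleBilin, map_add, EbarL_eq_linearCombination,
        add_mul, Finset.sum_add_distrib])
    (fun c X Y => by
      simp only [ip, LinearMap.smul_apply, sh_eq_shuffleBilin, map_smul,
        EbarL_eq_linearCombination, smul_eq_mul, Finset.mul_sum, mul_assoc])
    (fun X Y Y' => by
      simp only [ip, LinearMap.add_apply, sh_eq_shuffleBilin, map_add, EbarL_eq_linearCombination,
        add_mul, Finset.sum_add_distrib])
    (fun c X Y => by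
      simp only [ip, LinearMap.smul_apply, sh_eq_shuffleBilin, map_smul,
        EbarL_eq_linearCombination, smul_eq_mul, Finset.mul_sum, mul_assoc])

lemma ipForm_isSymm : (ipForm t Vf n).IsSymm where
  eq X Y := by
    simp only [ipForm, LinearMap.mk₂_apply, ip]
    rw [Finset.sum_comm]
    refine Finset.sum_congr rfl fun u _ => Finset.sum_congr rfl fun v _ => ?_
    rw [sh_eq_shuffleBilin, sh_eq_shuffleBilin, shuffleBilin_comm, real_inner_comm]

lemma ipForm_idE_sub_EE_comp_Sa :
    ipForm t Vf n ((idE d - EE d t) ∘ₗ Sa d) ((idE d - EE d t) ∘ₗ Sa d)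
      = ipForm t Vf n (idE d - EE d t) (idE d - EE d t) := by
  refine Finset.sum_congr rfl fun u _ => Finset.sum_congr rfl fun v _ => ?_
  rw [idE_sub_EE_comp_Sa_single, idE_sub_EE_comp_Sa_single, List.length_ofFn, List.length_ofFn,
    sh_eq_shuffleBilin, map_smul, map_smul, LinearMap.smul_apply, smul_smul, ← pow_add, ← two_mul, pow_mul,
    neg_one_sq, one_pow, one_smul, ← sh_eq_shuffleBilin, EbarL_sh_revE]

end InnerProduct

theorem stmt_5_general (d m : ℕ) (t : ℝ)
    {H : Type*} [NormedAddCommGroup H] [InnerProductSpace ℝ H]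
    (Vf : Word d → H) (ε : ℝ) :
    ip d t Vf m ((idE d - EE d t) ∘ₗ idE d) ((idE d - EE d t) ∘ₗ idE d)
      = ip d t Vf m ((idE d - EE d t) ∘ₗ Qeps d m ε) ((idE d - EE d t) ∘ₗ Qeps d m ε)
        + ip d t Vf m ((idE d - EE d t) ∘ₗ ((1 / 2 : ℝ) • (idE d + Sa d)))
                      ((idE d - EE d t) ∘ₗ ((1 / 2 : ℝ) • (idE d + Sa d)))
        - ε * ip d t Vf m ((idE d - EE d t) ∘ₗ (idE d - Sa d))
                          ((idE d - EE d t) ∘ₗ convPow d (idE d - nuE d) m)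
        - ε ^ 2 * ip d t Vf m ((idE d - EE d t) ∘ₗ convPow d (idE d - nuE d) m)
                              ((idE d - EE d t) ∘ₗ convPow d (idE d - nuE d) m) := by
  simp only [Qeps, LinearMap.comp_add, LinearMap.comp_sub, LinearMap.comp_smul]
  exact (ipForm_isSymm t Vf m).parallelogram_perturb (M := KA d →ₗ[ℝ] KA d)
    (ipForm_idE_sub_EE_comp_Sa t Vf m) _ ε

theorem stmt_5 (d m : ℕ) (hd : 1 ≤ d) (hm : 1 ≤ m) (t : ℝ) (ht : 0 < t)
    {H : Type*} [NormedAddCommGroup H] [InnerProductSpace ℝ H]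
    (Vf : Word d → H) (ε : ℝ) :
    ip d t Vf m ((idE d - EE d t) ∘ₗ idE d) ((idE d - EE d t) ∘ₗ idE d)
      = ip d t Vf m ((idE d - EE d t) ∘ₗ Qeps d m ε) ((idE d - EE d t) ∘ₗ Qeps d m ε)
        + ip d t Vf m ((idE d - EE d t) ∘ₗ ((1 / 2 : ℝ) • (idE d + Sa d)))
                      ((idE d - EE d t) ∘ₗ ((1 / 2 : ℝ) • (idE d + Sa d)))
        - ε * ip d t Vf m ((idE d - EE d t) ∘ₗ (idE d - Sa d))
                          ((idE d - EE d t) ∘ₗ convPow d (idE d - nuE d) m)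
        - ε ^ 2 * ip d t Vf m ((idE d - EE d t) ∘ₗ convPow d (idE d - nuE d) m)
                              ((idE d - EE d t) ∘ₗ convPow d (idE d - nuE d) m) :=
  stmt_5_general d m t Vf ε
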